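/- arXiv:0803.4410 — 5 statements merged into one kernel-verified Lean document; each statement's English description precedes it below -/
import Mathlib

section
/- If p ≥ 2 and d₁, d₂ are elements of a noncommutative L^p-space (or, as a special case, p-Schatten-class operators), then ‖(d₁*d₁ + d₂*d₂)^(1/2)‖_p ≤ (‖d₁‖_p² + ‖d₂‖_p²)^(1/2). -/
open scoped BigOperators ComplexOrder

noncomputable def Matrix.PosSemidef.sqrt {n : Type*} [Fintype n] [DecidableEq n] {𝕜 : Type*}
    [RCLike 𝕜] {A : Matrix n n 𝕜} (hA : Matrix.PosSemidef A) : Matrix n n 𝕜 :=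
  hA.1.eigenvectorUnitary.1 * Matrix.diagonal ((↑) ∘ (√·) ∘ hA.1.eigenvalues) *
    (star hA.1.eigenvectorUnitary : Matrix n n 𝕜)

/-- The Schatten `p`-norm of a `k × k` complex matrix, `‖a‖_p = (tr |a|^p)^(1/p)`,
computed via the eigenvalues of `aᴴ a` (whose `p/2`-powers are the `p`-th powers
of the singular values of `a`). -/
noncomputable def schattenNorm {k : ℕ} (p : ℝ) (a : Matrix (Fin k) (Fin k) ℂ) : ℝ :=
  (∑ i, ((Matrix.isHermitian_conjTranspose_mul_self a).eigenvalues i) ^ (p / 2)) ^ (1 / p)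

/-!
With `q = p / 2 ≥ 1` we have `‖a‖_p ^ 2 = ‖aᴴ a‖_q`, and the square root `S` of
`d₁ᴴ d₁ + d₂ᴴ d₂` satisfies `Sᴴ S = d₁ᴴ d₁ + d₂ᴴ d₂`, so the claim is the triangle inequality
`‖A + B‖_q ≤ ‖A‖_q + ‖B‖_q` for positive semidefinite `A`, `B`.

That inequality is proved by duality. If `A + B = U diag(μ) Uᴴ`, then `Y = U diag(μ^(q-1)) Uᴴ`
satisfies `tr((A + B) Y) = ∑ μᵢ^q = ‖A + B‖_q^q`. For `D = V diag(α) Vᴴ ≥ 0` one has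
`tr(D Y) = ∑ᵢⱼ αᵢ μⱼ^(q-1) |(Vᴴ U)ᵢⱼ|²`, and since `(|(Vᴴ U)ᵢⱼ|²)` is doubly stochastic,
Hölder's inequality bounds this by `‖D‖_q ‖A + B‖_q^(q-1)`. Adding the bounds for `D = A, B`
and dividing by `‖A + B‖_q^(q-1)` gives the triangle inequality.
-/

theorem Real.rpow_one_div_le_of_le_mul_rpow {S c q q' : ℝ} (hqq' : q.HolderConjugate q')
    (hS : 0 ≤ S) (hc : 0 ≤ c) (h : S ≤ c * S ^ (1 / q')) : S ^ (1 / q) ≤ c := by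
  obtain rfl | hS := hS.eq_or_lt
  · rwa [Real.zero_rpow (one_div_pos.mpr hqq'.pos).ne']
  have hsplit : S ^ (1 / q) * S ^ (1 / q') = S := by
    rw [← Real.rpow_add hS, one_div, one_div, hqq'.inv_add_inv_eq_one, Real.rpow_one]
  refine le_of_mul_le_mul_right ?_ (Real.rpow_pos_of_pos hS (1 / q'))
  rwa [hsplit]

namespace Matrix

variable {n 𝕜 : Type*} [Fintype n] [DecidableEq n] [RCLike 𝕜] {A : Matrix n n 𝕜}

theorem PosSemidef.conjTranspose_sqrt_mul_sqrt (hA : A.PosSemidef) :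
    hA.sqrtᴴ * hA.sqrt = A := by
  have hD : (diagonal (RCLike.ofReal ∘ (√·) ∘ hA.1.eigenvalues) : Matrix n n 𝕜)ᴴ *
      diagonal (RCLike.ofReal ∘ (√·) ∘ hA.1.eigenvalues) =
        diagonal (RCLike.ofReal ∘ hA.1.eigenvalues) := by
    rw [diagonal_conjTranspose, diagonal_mul_diagonal]
    congr 1
    ext i
    simp [← RCLike.ofReal_mul, Real.mul_self_sqrt (hA.eigenvalues_nonneg i)]
  change (Unitary.conjStarAlgAut 𝕜 _ hA.1.eigenvectorUnitary (diagonal _))ᴴ *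
    Unitary.conjStarAlgAut 𝕜 _ hA.1.eigenvectorUnitary (diagonal _) = A
  rw [← star_eq_conjTranspose, ← map_star, ← map_mul, star_eq_conjTranspose, hD,
    ← hA.1.spectral_theorem]

theorem norm_sq_mem_doublyStochastic_of_mem_unitaryGroup {U : Matrix n n 𝕜}
    (hU : U ∈ unitaryGroup n 𝕜) : of (fun i j => ‖U i j‖ ^ 2) ∈ doublyStochastic ℝ n := by
  refine mem_doublyStochastic_iff_sum.mpr ⟨fun i j => sq_nonneg _, fun i => ?_, fun j => ?_⟩
  · have h := congr_fun₂ (mem_unitaryGroup_iff.mp hU) i i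
    simp only [mul_apply, star_apply, RCLike.star_def, RCLike.mul_conj, one_apply_eq] at h
    exact_mod_cast h
  · have h := congr_fun₂ (mem_unitaryGroup_iff'.mp hU) j j
    simp only [mul_apply, star_apply, RCLike.star_def, RCLike.conj_mul, one_apply_eq] at h
    exact_mod_cast h

theorem sum_sum_mul_mul_le_of_mem_doublyStochastic {q q' : ℝ} (hqq' : q.HolderConjugate q')
    {T : Matrix n n ℝ} (hT : T ∈ doublyStochastic ℝ n) {a b : n → ℝ} (ha : 0 ≤ a) (hb : 0 ≤ b) :
    ∑ i, ∑ j, a i * b j * T i j ≤ (∑ i, a i ^ q) ^ (1 / q) * (∑ j, b j ^ q') ^ (1 / q') := by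
  have hT₀ : ∀ i j, 0 ≤ T i j := fun i j => nonneg_of_mem_doublyStochastic hT
  have holder := Real.inner_le_Lp_mul_Lq_of_nonneg Finset.univ hqq'
    (f := fun x : n × n => a x.1 * T x.1 x.2 ^ (1 / q))
    (g := fun x : n × n => b x.2 * T x.1 x.2 ^ (1 / q'))
    (fun x _ => mul_nonneg (ha _) (Real.rpow_nonneg (hT₀ _ _) _))
    (fun x _ => mul_nonneg (hb _) (Real.rpow_nonneg (hT₀ _ _) _))
  have hsplit : ∀ i j, T i j ^ (1 / q) * T i j ^ (1 / q') = T i j := fun i j => by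
    rw [← Real.rpow_add' (hT₀ i j) (by simp [hqq'.inv_add_inv_eq_one]), one_div, one_div,
      hqq'.inv_add_inv_eq_one, Real.rpow_one]
  have hpow : ∀ {r : ℝ} (c : ℝ), r ≠ 0 → 0 ≤ c → ∀ i j,
      (c * T i j ^ (1 / r)) ^ r = c ^ r * T i j := fun c hr hc i j => by
    rw [Real.mul_rpow hc (Real.rpow_nonneg (hT₀ i j) _), one_div, Real.rpow_inv_rpow (hT₀ i j) hr]
  simp only [Fintype.sum_prod_type, hpow _ hqq'.ne_zero (ha _), hpow _ hqq'.symm.ne_zero (hb _),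
    ← Finset.mul_sum, sum_row_of_mem_doublyStochastic hT, mul_one] at holder
  rw [Finset.sum_comm (f := fun i j => b j ^ q' * T i j)] at holder
  simp only [← Finset.mul_sum, sum_col_of_mem_doublyStochastic hT, mul_one] at holder
  convert holder using 3 with i _ j
  rw [mul_mul_mul_comm, hsplit]

theorem trace_diagonal_mul_mul_diagonal_mul_star (M : Matrix n n 𝕜) (a b : n → ℝ) :
    trace (diagonal (RCLike.ofReal ∘ a) * M * diagonal (RCLike.ofReal ∘ b) * star M) =
      ((∑ i, ∑ j, a i * b j * ‖M i j‖ ^ 2 : ℝ) : 𝕜) := by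
  simp only [trace, diag_apply, mul_apply, diagonal_apply, star_apply, Function.comp_apply,
    ite_mul, zero_mul, mul_ite, mul_zero, Finset.sum_ite_eq, Finset.sum_ite_eq', Finset.mem_univ,
    if_true, RCLike.star_def, RCLike.ofReal_sum, RCLike.ofReal_mul, RCLike.ofReal_pow,
    ← RCLike.mul_conj]
  exact Finset.sum_congr rfl fun i _ => Finset.sum_congr rfl fun j _ => by ring

theorem trace_conj_diagonal_mul_conj_diagonal (V W : Matrix n n 𝕜) (a b : n → ℝ) :
    trace (V * diagonal (RCLike.ofReal ∘ a) * star V *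
        (W * diagonal (RCLike.ofReal ∘ b) * star W)) =
      ((∑ i, ∑ j, a i * b j * ‖(star V * W) i j‖ ^ 2 : ℝ) : 𝕜) := by
  rw [← trace_diagonal_mul_mul_diagonal_mul_star, star_mul, star_star, Matrix.mul_assoc V,
    Matrix.mul_assoc V, trace_mul_comm]
  simp only [Matrix.mul_assoc]

theorem IsHermitian.trace_mul_conj_eigenvectorUnitary_diagonal (hA : A.IsHermitian)
    (ν : n → ℝ) :
    trace (A * ((hA.eigenvectorUnitary : Matrix n n 𝕜) * diagonal (RCLike.ofReal ∘ ν) *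
        star (hA.eigenvectorUnitary : Matrix n n 𝕜))) =
      ((∑ i, hA.eigenvalues i * ν i : ℝ) : 𝕜) := by
  set U := hA.eigenvectorUnitary
  have hA' : A = (U : Matrix n n 𝕜) * diagonal (RCLike.ofReal ∘ hA.eigenvalues) *
      (star U : Matrix n n 𝕜) :=
    hA.spectral_theorem
  conv_lhs => rw [hA']
  rw [trace_conj_diagonal_mul_conj_diagonal, Unitary.coe_star_mul_self]
  simp [one_apply, apply_ite (‖·‖), ite_pow]

theorem PosSemidef.re_trace_mul_conj_diagonal_le {D : Matrix n n 𝕜} (hD : D.PosSemidef)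
    {U : Matrix n n 𝕜} (hU : U ∈ unitaryGroup n 𝕜) {ν : n → ℝ} (hν : 0 ≤ ν) {q q' : ℝ}
    (hqq' : q.HolderConjugate q') :
    RCLike.re (trace (D * (U * diagonal (RCLike.ofReal ∘ ν) * star U))) ≤
      (∑ i, hD.1.eigenvalues i ^ q) ^ (1 / q) * (∑ j, ν j ^ q') ^ (1 / q') := by
  have hM : star (hD.1.eigenvectorUnitary : Matrix n n 𝕜) * U ∈ unitaryGroup n 𝕜 :=
    Submonoid.mul_mem _ (Unitary.star_mem hD.1.eigenvectorUnitary.2) hU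
  conv_lhs => rw [hD.1.spectral_theorem, Unitary.conjStarAlgAut_apply]
  rw [trace_conj_diagonal_mul_conj_diagonal, RCLike.ofReal_re]
  exact sum_sum_mul_mul_le_of_mem_doublyStochastic hqq'
    (norm_sq_mem_doublyStochastic_of_mem_unitaryGroup hM) hD.eigenvalues_nonneg hν

theorem PosSemidef.sum_eigenvalues_rpow_nonneg (hA : A.PosSemidef) (r : ℝ) :
    0 ≤ ∑ i, hA.1.eigenvalues i ^ r :=
  Finset.sum_nonneg fun i _ => Real.rpow_nonneg (hA.eigenvalues_nonneg i) r

theorem PosSemidef.rpow_sum_eigenvalues_add_le {B : Matrix n n 𝕜} (hA : A.PosSemidef)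
    (hB : B.PosSemidef) {q : ℝ} (hq : 1 ≤ q) :
    (∑ i, (hA.add hB).1.eigenvalues i ^ q) ^ (1 / q) ≤
      (∑ i, hA.1.eigenvalues i ^ q) ^ (1 / q) + (∑ i, hB.1.eigenvalues i ^ q) ^ (1 / q) := by
  obtain rfl | hq := hq.eq_or_lt
  · have htrace := (hA.add hB).1.trace_eq_sum_eigenvalues
    rw [trace_add, hA.1.trace_eq_sum_eigenvalues, hB.1.trace_eq_sum_eigenvalues] at htrace
    simp only [div_one, Real.rpow_one]
    exact_mod_cast htrace.symm.le
  have hqq' : q.HolderConjugate q.conjExponent := .conjExponent hq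
  set μ := (hA.add hB).1.eigenvalues
  have hμ : ∀ i, 0 ≤ μ i := (hA.add hB).eigenvalues_nonneg
  set ν : n → ℝ := fun i => μ i ^ (q - 1)
  have hν : 0 ≤ ν := fun i => Real.rpow_nonneg (hμ i) _
  have hμν : ∑ i, μ i * ν i = ∑ i, μ i ^ q := Finset.sum_congr rfl fun i _ => by
    rw [← Real.rpow_one_add' (hμ i) (by linarith), add_sub_cancel]
  have hνq' : ∑ i, ν i ^ q.conjExponent = ∑ i, μ i ^ q := Finset.sum_congr rfl fun i _ => by
    rw [← Real.rpow_mul (hμ i), hqq'.sub_one_mul_conj]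
  have hnorm_nonneg {D : Matrix n n 𝕜} (hD : D.PosSemidef) :
      0 ≤ (∑ i, hD.1.eigenvalues i ^ q) ^ (1 / q) :=
    Real.rpow_nonneg (hD.sum_eigenvalues_rpow_nonneg q) _
  refine Real.rpow_one_div_le_of_le_mul_rpow hqq' ((hA.add hB).sum_eigenvalues_rpow_nonneg q)
    (add_nonneg (hnorm_nonneg hA) (hnorm_nonneg hB)) ?_
  set U : Matrix n n 𝕜 := ((hA.add hB).1.eigenvectorUnitary : Matrix n n 𝕜)
  have hU : U ∈ unitaryGroup n 𝕜 := (hA.add hB).1.eigenvectorUnitary.2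
  set Y := U * diagonal (RCLike.ofReal ∘ ν) * star U
  have hY : RCLike.re (trace ((A + B) * Y)) = ∑ i, μ i ^ q := by
    rw [(hA.add hB).1.trace_mul_conj_eigenvectorUnitary_diagonal, RCLike.ofReal_re, hμν]
  calc ∑ i, μ i ^ q = RCLike.re (trace (A * Y)) + RCLike.re (trace (B * Y)) := by
        rw [← hY, add_mul, trace_add, map_add]
    _ ≤ (∑ i, hA.1.eigenvalues i ^ q) ^ (1 / q) *
          (∑ i, ν i ^ q.conjExponent) ^ (1 / q.conjExponent) +
        (∑ i, hB.1.eigenvalues i ^ q) ^ (1 / q) *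
          (∑ i, ν i ^ q.conjExponent) ^ (1 / q.conjExponent) :=
      add_le_add (hA.re_trace_mul_conj_diagonal_le hU hν hqq')
        (hB.re_trace_mul_conj_diagonal_le hU hν hqq')
    _ = _ := by rw [hνq', add_mul]

end Matrix

theorem schattenNorm_sq {k : ℕ} {p : ℝ} (hp : 0 < p) (a : Matrix (Fin k) (Fin k) ℂ) :
    schattenNorm p a ^ 2 =
      (∑ i, (Matrix.isHermitian_conjTranspose_mul_self a).eigenvalues i ^ (p / 2)) ^
        (1 / (p / 2)) := by
  rw [schattenNorm, ← Real.rpow_natCast, ← Real.rpow_mul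
    ((Matrix.posSemidef_conjTranspose_mul_self a).sum_eigenvalues_rpow_nonneg _)]
  congr 1
  field_simp
  norm_num

/-- If `p ≥ 2` then `‖(d₁* d₁ + d₂* d₂)^(1/2)‖_p ≤ (‖d₁‖_p² + ‖d₂‖_p²)^(1/2)`
for `p`-Schatten-class operators (here: matrices). -/
theorem schattenNorm_sqrt_add_le {k : ℕ} (p : ℝ) (hp : 2 ≤ p)
    (d₁ d₂ : Matrix (Fin k) (Fin k) ℂ) :
    schattenNorm p
        (((Matrix.posSemidef_conjTranspose_mul_self d₁).add
          (Matrix.posSemidef_conjTranspose_mul_self d₂)).sqrt) ≤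
      Real.sqrt (schattenNorm p d₁ ^ 2 + schattenNorm p d₂ ^ 2) := by
  have hp₀ : 0 < p := by linarith
  set hA := Matrix.posSemidef_conjTranspose_mul_self d₁
  set hB := Matrix.posSemidef_conjTranspose_mul_self d₂
  have heig : (Matrix.isHermitian_conjTranspose_mul_self (hA.add hB).sqrt).eigenvalues =
      (hA.add hB).1.eigenvalues :=
    (Matrix.IsHermitian.eigenvalues_eq_eigenvalues_iff _ _).mpr
      (by rw [(hA.add hB).conjTranspose_sqrt_mul_sqrt])
  refine Real.le_sqrt_of_sq_le ?_
  rw [schattenNorm_sq hp₀, schattenNorm_sq hp₀, schattenNorm_sq hp₀, heig]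
  exact hA.rpow_sum_eigenvalues_add_le hB (by linarith)
end

section
/- Let M be a semifinite von Neumann algebra, p ≥ 2, and q defined by 1/p + 1/q = 1/2. Suppose y ∈ L^{p'}(M), a ∈ L^q(M)₊, b ∈ L²(M)₊ satisfy |φ(yzd)| ≤ ‖da‖₂‖bz‖₂ for all z ∈ M and d ∈ L^p(M). Then there exists w ∈ M with ‖w‖ ≤ 1 and y = awb, and moreover w = Q_a w Q_b where Q_a, Q_b are the support projections of a and b. -/
open scoped BigOperators ComplexOrder

/-- The operator (spectral) norm of a `k × k` complex matrix. -/
noncomputable def matOpNorm {k : ℕ} (w : Matrix (Fin k) (Fin k) ℂ) : ℝ :=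
  ‖LinearMap.toContinuousLinearMap (Matrix.toEuclideanLin w)‖

/-!
Testing the hypothesis on rank-one matrices `z = η η*`, `d = η ξ*` gives the sesquilinear bound
`|⟪ξ, y η⟫| ≤ ‖a ξ‖ ‖b η‖`. Hence `(1 - a a⁺) y = 0 = y (1 - b⁺ b)`, where `a⁺ = a⁻¹` on the
support of `a` and `0` on its kernel, so `y = a w b` for `w = a⁺ y b⁺`; and
`|⟪ξ, w η⟫| ≤ ‖a a⁺ ξ‖ ‖b b⁺ η‖ ≤ ‖ξ‖ ‖η‖` because `a a⁺` and `b b⁺` are orthogonal projections.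
-/

open scoped InnerProductSpace

section PseudoInverse

variable {A : Type*} [Ring A] [StarRing A] [Algebra ℝ A] [TopologicalSpace A]
  [ContinuousFunctionalCalculus ℝ A IsSelfAdjoint] {a : A}

/-- Since `0⁻¹ = 0` in `ℝ`, this is the Moore–Penrose pseudo-inverse of a self-adjoint `a`
with finite spectrum. -/
noncomputable def pseudoInv (a : A) : A := cfc (·⁻¹ : ℝ → ℝ) a

lemma isSelfAdjoint_pseudoInv (a : A) : IsSelfAdjoint (pseudoInv a) := cfc_predicate _ a

lemma commute_pseudoInv (ha : IsSelfAdjoint a) : Commute a (pseudoInv a) := by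
  simpa only [pseudoInv, cfc_id' ℝ a] using cfc_commute_cfc (fun x : ℝ ↦ x) (·⁻¹ : ℝ → ℝ) a

variable [Finite (spectrum ℝ a)]

lemma cfc_mul_mul_of_finite (f g h : ℝ → ℝ) :
    cfc f a * cfc g a * cfc h a = cfc (fun x ↦ f x * g x * h x) a := by
  have hc (f : ℝ → ℝ) : ContinuousOn f (spectrum ℝ a) := (Set.toFinite _).continuousOn f
  rw [cfc_mul _ _ _ (hc _) (hc _), cfc_mul _ _ _ (hc _) (hc _)]

lemma mul_pseudoInv_mul_self (ha : IsSelfAdjoint a) : a * pseudoInv a * a = a := by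
  calc a * pseudoInv a * a = cfc (fun x : ℝ ↦ x * x⁻¹ * x) a := by
        rw [← cfc_mul_mul_of_finite, cfc_id' ℝ a]; rfl
    _ = a := by simp only [mul_inv_mul_cancel, cfc_id' ℝ a]

lemma pseudoInv_mul_self_mul_pseudoInv (ha : IsSelfAdjoint a) :
    pseudoInv a * a * pseudoInv a = pseudoInv a := by
  calc pseudoInv a * a * pseudoInv a = cfc (fun x : ℝ ↦ x⁻¹ * x * x⁻¹) a := by
        rw [← cfc_mul_mul_of_finite, cfc_id' ℝ a]; rfl
    _ = pseudoInv a := cfc_congr fun x _ ↦ by simpa using mul_inv_mul_cancel x⁻¹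

lemma isStarProjection_mul_pseudoInv (ha : IsSelfAdjoint a) :
    IsStarProjection (a * pseudoInv a) where
  isIdempotentElem := by
    rw [IsIdempotentElem, ← mul_assoc, mul_pseudoInv_mul_self ha]
  isSelfAdjoint :=
    (IsSelfAdjoint.commute_iff ha (isSelfAdjoint_pseudoInv a)).mp (commute_pseudoInv ha)

lemma mul_pseudoInv_eq_of_mul_eq {p : A} (ha : IsSelfAdjoint a) (hp : p * a = a) :
    p * pseudoInv a = pseudoInv a := by
  calc p * pseudoInv a = p * (pseudoInv a * a * pseudoInv a) := by
        rw [pseudoInv_mul_self_mul_pseudoInv ha]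
    _ = p * a * pseudoInv a * pseudoInv a := by
        rw [← (commute_pseudoInv ha).eq]; simp only [mul_assoc]
    _ = pseudoInv a := by
        rw [hp, (commute_pseudoInv ha).eq, pseudoInv_mul_self_mul_pseudoInv ha]

lemma pseudoInv_mul_eq_of_mul_eq {p : A} (ha : IsSelfAdjoint a) (hp : a * p = a) :
    pseudoInv a * p = pseudoInv a := by
  calc pseudoInv a * p = pseudoInv a * a * pseudoInv a * p := by
        rw [pseudoInv_mul_self_mul_pseudoInv ha]
    _ = pseudoInv a * pseudoInv a * (a * p) := by
        rw [mul_assoc (pseudoInv a) a, (commute_pseudoInv ha).eq]; simp only [mul_assoc]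
    _ = pseudoInv a := by
        rw [hp, mul_assoc, ← (commute_pseudoInv ha).eq, ← mul_assoc,
          pseudoInv_mul_self_mul_pseudoInv ha]

end PseudoInverse

section InnerProductSpace

variable {𝕜 E F G : Type*} [RCLike 𝕜] [NormedAddCommGroup E] [InnerProductSpace 𝕜 E]
  [CompleteSpace E] [NormedAddCommGroup F] [InnerProductSpace 𝕜 F]
  [NormedAddCommGroup G] [InnerProductSpace 𝕜 G]

lemma ContinuousLinearMap.norm_mul_mul_le_of_norm_inner_le {Y S R : E →L[𝕜] E}
    {A : E →L[𝕜] F} {B : E →L[𝕜] G} (hY : ∀ ξ η, ‖⟪ξ, Y η⟫_𝕜‖ ≤ ‖A ξ‖ * ‖B η‖)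
    (hS : IsSelfAdjoint S) :
    ‖S * Y * R‖ ≤ ‖A.comp S‖ * ‖B.comp R‖ := by
  refine opNorm_le_of_re_inner_le (by positivity) fun η ξ hη hξ ↦ ?_
  calc RCLike.re ⟪(S * Y * R) η, ξ⟫_𝕜 ≤ ‖⟪S (Y (R η)), ξ⟫_𝕜‖ := RCLike.re_le_norm _
    _ = ‖⟪S ξ, Y (R η)⟫_𝕜‖ := by
        rw [← norm_inner_symm]; exact congrArg norm (hS.isSymmetric _ _).symm
    _ ≤ ‖A (S ξ)‖ * ‖B (R η)‖ := hY _ _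
    _ ≤ ‖A.comp S‖ * ‖B.comp R‖ := by
        simpa [hη, hξ] using mul_le_mul ((A.comp S).le_opNorm ξ) ((B.comp R).le_opNorm η)
          (norm_nonneg _) (by positivity)

end InnerProductSpace

namespace Matrix

open WithLp

lemma mul_eq_of_range_le {R m n : Type*} [CommSemiring R] [Fintype m] [Fintype n]
    {P : Matrix m m R} {A : Matrix m n R} (hP : IsIdempotentElem P)
    (h : LinearMap.range A.mulVecLin ≤ LinearMap.range P.mulVecLin) : P * A = A := by
  classical
  refine toLin'.injective (LinearMap.ext fun v ↦ ?_)
  obtain ⟨u, hu⟩ := h (LinearMap.mem_range_self _ v)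
  simp only [mulVecLin_apply] at hu
  rw [toLin'_apply, toLin'_apply, ← mulVec_mulVec, ← hu, mulVec_mulVec, hP.eq]

variable {k : ℕ}

local notation "toCLM" => toEuclideanCLM (𝕜 := ℂ) (n := Fin k)

lemma schattenNorm_two_eq_sqrt (A : Matrix (Fin k) (Fin k) ℂ) :
    schattenNorm 2 A = √(∑ i, ∑ j, ‖A i j‖ ^ 2) := by
  have htr : (Aᴴ * A).trace = ((∑ i, ∑ j, ‖A i j‖ ^ 2 : ℝ) : ℂ) := by
    push_cast
    rw [Finset.sum_comm]
    simp only [trace, diag, mul_apply, conjTranspose_apply, RCLike.star_def, Complex.conj_mul']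
  have hsum : ∑ i, (isHermitian_conjTranspose_mul_self A).eigenvalues i
      = ∑ i, ∑ j, ‖A i j‖ ^ 2 := by
    have h := (isHermitian_conjTranspose_mul_self A).trace_eq_sum_eigenvalues.symm.trans htr
    rw [← RCLike.ofReal_sum] at h
    exact RCLike.ofReal_injective h
  unfold schattenNorm
  rw [div_self two_ne_zero]
  simp only [Real.rpow_one]
  rw [hsum, Real.sqrt_eq_rpow]

lemma schattenNorm_two_vecMulVec (x y : EuclideanSpace ℂ (Fin k)) :
    schattenNorm 2 (vecMulVec (ofLp x) (star (ofLp y))) = ‖x‖ * ‖y‖ := by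
  simp only [schattenNorm_two_eq_sqrt, EuclideanSpace.norm_eq, vecMulVec_apply, Pi.star_apply,
    norm_mul, norm_star, mul_pow, ← Finset.sum_mul_sum,
    Real.sqrt_mul (Finset.sum_nonneg fun _ _ ↦ sq_nonneg _)]

section TraceBound

variable {y a b : Matrix (Fin k) (Fin k) ℂ}
  (H : ∀ z d : Matrix (Fin k) (Fin k) ℂ,
    ‖(y * z * d).trace‖ ≤ schattenNorm 2 (d * a) * schattenNorm 2 (b * z))
include H

lemma norm_inner_le_of_trace_le (ha : a.IsHermitian) (ξ η : EuclideanSpace ℂ (Fin k)) :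
    ‖⟪ξ, toCLM y η⟫_ℂ‖ ≤ ‖toCLM a ξ‖ * ‖toCLM b η‖ := by
  rcases eq_or_ne η 0 with rfl | hη
  · simp
  -- Both sides of the tested inequality carry the factor `‖η‖ ^ 2`, hence the case split.
  have htr : (y * vecMulVec (ofLp η) (star (ofLp η)) * vecMulVec (ofLp η) (star (ofLp ξ))).trace
      = ⟪ξ, toCLM y η⟫_ℂ * ⟪η, η⟫_ℂ := by
    rw [mul_assoc, vecMulVec_mul_vecMulVec, mul_vecMulVec, trace_vecMulVec, dotProduct_smul,
      smul_eq_mul, mul_comm, dotProduct_comm (star _)]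
    rfl
  have hda : vecMulVec (ofLp η) (star (ofLp ξ)) * a
      = vecMulVec (ofLp η) (star (ofLp (toCLM a ξ))) := by
    rw [vecMulVec_mul, ofLp_toEuclideanCLM, star_mulVec, ha.eq]
  have hbz : b * vecMulVec (ofLp η) (star (ofLp η))
      = vecMulVec (ofLp (toCLM b η)) (star (ofLp η)) := mul_vecMulVec _ _ _
  have key := H (vecMulVec (ofLp η) (star (ofLp η))) (vecMulVec (ofLp η) (star (ofLp ξ)))
  rw [htr, hda, hbz, schattenNorm_two_vecMulVec, schattenNorm_two_vecMulVec, norm_mul,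
    inner_self_eq_norm_sq_to_K, norm_pow, RCLike.norm_ofReal, abs_norm] at key
  have hη2 : 0 < ‖η‖ ^ 2 := by positivity
  nlinarith

lemma norm_toEuclideanCLM_mul_mul_le_of_trace_le (ha : a.IsHermitian)
    {S : Matrix (Fin k) (Fin k) ℂ} (hS : IsSelfAdjoint S) (R : Matrix (Fin k) (Fin k) ℂ) :
    ‖toCLM (S * y * R)‖ ≤ ‖toCLM (a * S)‖ * ‖toCLM (b * R)‖ := by
  simpa only [map_mul, ← ContinuousLinearMap.mul_def] using
    ContinuousLinearMap.norm_mul_mul_le_of_norm_inner_le (norm_inner_le_of_trace_le H ha)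
      (hS.map toCLM)

lemma mul_mul_eq_zero_of_trace_le (ha : a.IsHermitian) {S R : Matrix (Fin k) (Fin k) ℂ}
    (hS : IsSelfAdjoint S) (h : a * S = 0 ∨ b * R = 0) : S * y * R = 0 := by
  have hle : ‖toCLM (S * y * R)‖ ≤ 0 := by
    rcases h with h | h <;>
      simpa only [h, map_zero, norm_zero, zero_mul, mul_zero] using
        norm_toEuclideanCLM_mul_mul_le_of_trace_le H ha hS R
  exact (map_eq_zero_iff _ toEuclideanCLM.injective).mp (norm_le_zero_iff.mp hle)

lemma self_mul_pseudoInv_mul_mul_pseudoInv_mul_self_of_trace_le (ha : a.IsHermitian)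
    (hb : b.IsHermitian) : a * (pseudoInv a * y * pseudoInv b) * b = y := by
  have hleft : (1 - a * pseudoInv a) * y * 1 = 0 := by
    refine mul_mul_eq_zero_of_trace_le H ha
      (isStarProjection_mul_pseudoInv ha.isSelfAdjoint).one_sub.isSelfAdjoint (Or.inl ?_)
    rw [mul_sub, mul_one, (commute_pseudoInv ha.isSelfAdjoint).eq, ← mul_assoc,
      mul_pseudoInv_mul_self ha.isSelfAdjoint, sub_self]
  have hright : 1 * y * (1 - pseudoInv b * b) = 0 := by
    refine mul_mul_eq_zero_of_trace_le H ha (.one _) (Or.inr ?_)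
    rw [mul_sub, mul_one, ← mul_assoc, mul_pseudoInv_mul_self hb.isSelfAdjoint, sub_self]
  rw [mul_one, sub_mul, one_mul, sub_eq_zero] at hleft
  rw [one_mul, mul_sub, mul_one, sub_eq_zero] at hright
  calc a * (pseudoInv a * y * pseudoInv b) * b = a * pseudoInv a * y * (pseudoInv b * b) := by
        simp only [mul_assoc]
    _ = y := by rw [← hleft]; exact hright.symm

lemma matOpNorm_pseudoInv_mul_mul_pseudoInv_le_one_of_trace_le (ha : a.IsHermitian)
    (hb : b.IsHermitian) : matOpNorm (pseudoInv a * y * pseudoInv b) ≤ 1 :=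
  (norm_toEuclideanCLM_mul_mul_le_of_trace_le H ha (isSelfAdjoint_pseudoInv a) _).trans <|
    mul_le_one₀ ((isStarProjection_mul_pseudoInv ha.isSelfAdjoint).map _).norm_le (norm_nonneg _)
      ((isStarProjection_mul_pseudoInv hb.isSelfAdjoint).map _).norm_le

end TraceBound

end Matrix

open Matrix

theorem exists_factorisation_general {k : ℕ}
    (y a b : Matrix (Fin k) (Fin k) ℂ) (ha : a.PosSemidef) (hb : b.PosSemidef)
    (Qa Qb : Matrix (Fin k) (Fin k) ℂ)
    (hQa : Qa.IsHermitian ∧ Qa * Qa = Qa ∧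
      LinearMap.range Qa.mulVecLin = LinearMap.range a.mulVecLin)
    (hQb : Qb.IsHermitian ∧ Qb * Qb = Qb ∧
      LinearMap.range Qb.mulVecLin = LinearMap.range b.mulVecLin)
    (H : ∀ z d : Matrix (Fin k) (Fin k) ℂ,
      ‖(y * z * d).trace‖ ≤ schattenNorm 2 (d * a) * schattenNorm 2 (b * z)) :
    ∃ w : Matrix (Fin k) (Fin k) ℂ,
      matOpNorm w ≤ 1 ∧ y = a * w * b ∧ w = Qa * w * Qb := by
  obtain ⟨-, hQa2, hQaR⟩ := hQa
  obtain ⟨hQbH, hQb2, hQbR⟩ := hQb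
  have hQa_a : Qa * a = a := mul_eq_of_range_le hQa2 hQaR.ge
  have hb_Qb : b * Qb = b := by
    simpa [hQbH.eq, hb.1.eq] using congrArg conjTranspose (mul_eq_of_range_le hQb2 hQbR.ge)
  refine ⟨pseudoInv a * y * pseudoInv b,
    matOpNorm_pseudoInv_mul_mul_pseudoInv_le_one_of_trace_le H ha.1 hb.1,
    (self_mul_pseudoInv_mul_mul_pseudoInv_mul_self_of_trace_le H ha.1 hb.1).symm, ?_⟩
  rw [← mul_assoc Qa, ← mul_assoc Qa, mul_pseudoInv_eq_of_mul_eq ha.1.isSelfAdjoint hQa_a,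
    mul_assoc _ (pseudoInv b), pseudoInv_mul_eq_of_mul_eq hb.1.isSelfAdjoint hb_Qb]

/-- Factorisation lemma: if `|φ(y z d)| ≤ ‖d a‖₂ ‖b z‖₂` for all `z ∈ M`, `d ∈ L^p(M)`
(`M` the matrix algebra, `φ` the trace), with `a ≥ 0`, `b ≥ 0`, then `y = a w b` for
some contraction `w ∈ M` with `w = Q_a w Q_b`, where `Q_a, Q_b` are the support
projections of `a` and `b`. -/
theorem exists_factorisation {k : ℕ} (p q : ℝ) (hp : 2 ≤ p) (hq : 2 ≤ q)
    (hpq : 1 / p + 1 / q = 1 / 2)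
    (y a b : Matrix (Fin k) (Fin k) ℂ) (ha : a.PosSemidef) (hb : b.PosSemidef)
    (Qa Qb : Matrix (Fin k) (Fin k) ℂ)
    (hQa : Qa.IsHermitian ∧ Qa * Qa = Qa ∧
      LinearMap.range Qa.mulVecLin = LinearMap.range a.mulVecLin)
    (hQb : Qb.IsHermitian ∧ Qb * Qb = Qb ∧
      LinearMap.range Qb.mulVecLin = LinearMap.range b.mulVecLin)
    (H : ∀ z d : Matrix (Fin k) (Fin k) ℂ,
      ‖(y * z * d).trace‖ ≤ schattenNorm 2 (d * a) * schattenNorm 2 (b * z)) :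
    ∃ w : Matrix (Fin k) (Fin k) ℂ,
      matOpNorm w ≤ 1 ∧ y = a * w * b ∧ w = Qa * w * Qb :=
  exists_factorisation_general y a b ha hb Qa Qb hQa hQb H
end

section
/- Let (g_n) be a finite family of vectors and h a vector in a Hilbert space H, and let w_j, z_{nj} ∈ B(H) be finite families. Then |∑_n ⟨(∑_j z_{nj} w_j) g_n, h⟩| ≤ ‖∑_j w_j* w_j‖^(1/2) · (∑_n ‖g_n‖²)^(1/2) · ‖∑_{n,j} z_{nj} z_{nj}*‖^(1/2) · ‖h‖. -/
open scoped BigOperators InnerProductSpace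

/-!
Moving `z_{nj}` across the inner product writes the sum as `∑_{n,j} ⟪w_j g_n, z_{nj}* h⟫`, and
Cauchy–Schwarz over the index pairs `(n, j)` bounds it by the square roots of
`∑_{n,j} ‖w_j g_n‖²` and `∑_{n,j} ‖z_{nj}* h‖²`. Each of these is a quadratic form
`∑ ‖T_i x‖² = re ⟪(∑ T_i* T_i) x, x⟫ ≤ ‖∑ T_i* T_i‖ ‖x‖²`.
-/

open ContinuousLinearMap in
theorem sum_norm_apply_sq_le_norm_sum_adjoint_comp {𝕜 E F ι : Type*} [RCLike 𝕜]
    [NormedAddCommGroup E] [InnerProductSpace 𝕜 E] [CompleteSpace E]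
    [NormedAddCommGroup F] [InnerProductSpace 𝕜 F] [CompleteSpace F]
    (s : Finset ι) (T : ι → E →L[𝕜] F) (x : E) :
    ∑ i ∈ s, ‖T i x‖ ^ 2 ≤ ‖∑ i ∈ s, adjoint (T i) ∘L T i‖ * ‖x‖ ^ 2 := by
  set S := ∑ i ∈ s, adjoint (T i) ∘L T i
  have hS : ∑ i ∈ s, ‖T i x‖ ^ 2 = RCLike.re ⟪S x, x⟫_𝕜 := by
    simp only [S, sum_apply, sum_inner, map_sum, apply_norm_sq_eq_inner_adjoint_left]
  calc ∑ i ∈ s, ‖T i x‖ ^ 2 = RCLike.re ⟪S x, x⟫_𝕜 := hS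
    _ ≤ ‖S x‖ * ‖x‖ := re_inner_le_norm _ _
    _ ≤ ‖S‖ * ‖x‖ * ‖x‖ := by gcongr; exact S.le_opNorm x
    _ = ‖S‖ * ‖x‖ ^ 2 := by ring

theorem norm_sum_inner_le_sqrt_mul_sqrt {𝕜 E ι : Type*} [RCLike 𝕜]
    [NormedAddCommGroup E] [InnerProductSpace 𝕜 E] (s : Finset ι) (u v : ι → E) :
    ‖∑ i ∈ s, ⟪u i, v i⟫_𝕜‖ ≤ √(∑ i ∈ s, ‖u i‖ ^ 2) * √(∑ i ∈ s, ‖v i‖ ^ 2) :=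
  calc ‖∑ i ∈ s, ⟪u i, v i⟫_𝕜‖ ≤ ∑ i ∈ s, ‖u i‖ * ‖v i‖ :=
        (norm_sum_le _ _).trans (Finset.sum_le_sum fun _ _ => norm_inner_le_norm _ _)
    _ ≤ √(∑ i ∈ s, ‖u i‖ ^ 2) * √(∑ i ∈ s, ‖v i‖ ^ 2) := Real.sum_mul_le_sqrt_mul_sqrt _ _ _

open ContinuousLinearMap in
/-- For finite families of vectors `g_n`, a vector `h`, and operators
`w_j, z_{nj} ∈ B(H)`:
`|∑_n ⟨(∑_j z_{nj} w_j) g_n, h⟩| ≤ ‖∑_j w_j* w_j‖^(1/2) (∑_n ‖g_n‖²)^(1/2)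
  ‖∑_{n,j} z_{nj} z_{nj}*‖^(1/2) ‖h‖`. -/
theorem abs_sum_inner_le {H : Type*} [NormedAddCommGroup H]
    [InnerProductSpace ℂ H] [CompleteSpace H] {N J : ℕ}
    (g : Fin N → H) (h : H)
    (z : Fin N → Fin J → H →L[ℂ] H) (w : Fin J → H →L[ℂ] H) :
    ‖∑ n, ⟪(∑ j, z n j * w j) (g n), h⟫_ℂ‖ ≤
      Real.sqrt ‖∑ j, ContinuousLinearMap.adjoint (w j) * w j‖ *
        Real.sqrt (∑ n, ‖g n‖ ^ 2) *
        Real.sqrt ‖∑ n, ∑ j, z n j * ContinuousLinearMap.adjoint (z n j)‖ * ‖h‖ := by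
  have hsplit : ∑ n, ⟪(∑ j, z n j * w j) (g n), h⟫_ℂ =
      ∑ p : Fin N × Fin J, ⟪w p.2 (g p.1), adjoint (z p.1 p.2) h⟫_ℂ := by
    simp only [Fintype.sum_prod_type, sum_apply, sum_inner, mul_apply_eq_comp, adjoint_inner_right]
  have hw : ∑ p : Fin N × Fin J, ‖w p.2 (g p.1)‖ ^ 2 ≤
      ‖∑ j, adjoint (w j) * w j‖ * ∑ n, ‖g n‖ ^ 2 := by
    rw [Fintype.sum_prod_type, Finset.mul_sum]
    exact Finset.sum_le_sum fun n _ =>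
      sum_norm_apply_sq_le_norm_sum_adjoint_comp Finset.univ w (g n)
  have hz : ∑ p : Fin N × Fin J, ‖adjoint (z p.1 p.2) h‖ ^ 2 ≤
      ‖∑ n, ∑ j, z n j * adjoint (z n j)‖ * ‖h‖ ^ 2 := by
    simpa only [adjoint_adjoint, Fintype.sum_prod_type, ← mul_def] using
      sum_norm_apply_sq_le_norm_sum_adjoint_comp Finset.univ
        (fun p : Fin N × Fin J => adjoint (z p.1 p.2)) h
  calc ‖∑ n, ⟪(∑ j, z n j * w j) (g n), h⟫_ℂ‖
      ≤ √(∑ p : Fin N × Fin J, ‖w p.2 (g p.1)‖ ^ 2) *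
          √(∑ p : Fin N × Fin J, ‖adjoint (z p.1 p.2) h‖ ^ 2) := by
        rw [hsplit]; exact norm_sum_inner_le_sqrt_mul_sqrt _ _ _
    _ ≤ √(‖∑ j, adjoint (w j) * w j‖ * ∑ n, ‖g n‖ ^ 2) *
          √(‖∑ n, ∑ j, z n j * adjoint (z n j)‖ * ‖h‖ ^ 2) := by gcongr
    _ = _ := by
        rw [Real.sqrt_mul (norm_nonneg _), Real.sqrt_mul (norm_nonneg _),
          Real.sqrt_sq (norm_nonneg h)]
        ring
end

section
/- Let (e₁,…,e_k) be a basis of a finite-dimensional normed space E such that for every choice of signs ε ∈ {−1,1}^k the linear map V_ε sending e_i ↦ ε_i e_i is a contraction. Define the diagonal projection Δ on E ⊗ E (with a cross norm for which V_ε ⊗ V_ε is a contraction for all ε) by Δ(e_i ⊗ e_j) = 0 for i ≠ j and Δ(e_i ⊗ e_i) = e_i ⊗ e_i. Then Δ equals the average over ε ∈ {−1,1}^k of V_ε ⊗ V_ε, and hence Δ is a contraction. -/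
/-!
For `i ≠ j` the coefficient `ε_i ε_j` averages to zero over the cube `{±1}^k`, since flipping
`ε_i` is an involution that negates it, while for `i = j` it is identically `1`. Hence the
average of the `V_ε ⊗ V_ε` agrees with `Δ` on the basis `e_i ⊗ e_j`. An average of
contractions of a seminorm is again a contraction, by the triangle inequality.
-/

open Finset TensorProduct

theorem Seminorm.map_inv_card_smul_sum_le {𝕜 M ι : Type*} [RCLike 𝕜] [AddCommGroup M]
    [Module 𝕜 M] (ν : Seminorm 𝕜 M) (s : Finset ι) (y : ι → M) (x : M)
    (h : ∀ i ∈ s, ν (y i) ≤ ν x) :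
    ν ((#s : 𝕜)⁻¹ • ∑ i ∈ s, y i) ≤ ν x := by
  have hsum : ν (∑ i ∈ s, y i) ≤ #s * ν x := by
    calc ν (∑ i ∈ s, y i) ≤ ∑ i ∈ s, ν (y i) :=
          le_sum_of_subadditive ν (map_zero ν).le (map_add_le_add ν) s y
      _ ≤ #s • ν x := sum_le_card_nsmul s _ _ h
      _ = #s * ν x := nsmul_eq_mul _ _
  rw [map_smul_eq_mul, norm_inv, RCLike.norm_natCast]
  rcases (#s).eq_zero_or_pos with hs | hs
  · simp [hs]
  · rwa [inv_mul_le_iff₀ (by exact_mod_cast hs)]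

theorem sum_sign_mul_sign {R ι : Type*} [Ring R] [Fintype ι] [DecidableEq ι] (i j : ι) :
    ∑ ε : ι → Bool, (if ε i then (1 : R) else -1) * (if ε j then 1 else -1) =
      if i = j then 2 ^ Fintype.card ι else 0 := by
  split_ifs with hij
  · subst hij
    have hsq (ε : ι → Bool) : (if ε i then (1 : R) else -1) * (if ε i then 1 else -1) = 1 := by
      cases ε i <;> simp
    simp [hsq]
  · refine sum_ninvolution (fun ε => Function.update ε i (!ε i)) (fun ε => ?_) (fun ε _ h => ?_)
      (fun _ => mem_univ _) (fun ε => ?_)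
    · simp only [Function.update_self, Function.update_of_ne (Ne.symm hij)]
      cases ε i <;> cases ε j <;> simp
    · simpa using congrFun h i
    · simp

section signChange

variable {R M ι : Type*} [CommRing R] [AddCommGroup M] [Module R M]

noncomputable def signChange (e : Module.Basis ι R M) (ε : ι → Bool) : M →ₗ[R] M :=
  e.constr R fun i => (if ε i then (1 : R) else -1) • e i

noncomputable def diagonalProjection [DecidableEq ι] (e : Module.Basis ι R M) :
    M ⊗[R] M →ₗ[R] M ⊗[R] M :=
  (e.tensorProduct e).constr R fun ij => if ij.1 = ij.2 then e ij.1 ⊗ₜ[R] e ij.2 else 0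

theorem signChange_apply_basis (e : Module.Basis ι R M) (ε : ι → Bool) (i : ι) :
    signChange e ε (e i) = (if ε i then (1 : R) else -1) • e i :=
  e.constr_basis R _ i

theorem map_signChange_tmul_basis (e : Module.Basis ι R M) (ε : ι → Bool) (i j : ι) :
    map (signChange e ε) (signChange e ε) (e i ⊗ₜ e j) =
      ((if ε i then (1 : R) else -1) * (if ε j then 1 else -1)) • (e i ⊗ₜ[R] e j) := by
  rw [map_tmul, signChange_apply_basis, signChange_apply_basis, smul_tmul_smul]

end signChange

theorem diagonalProjection_eq_average {K M ι : Type*} [Field K] [CharZero K] [AddCommGroup M]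
    [Module K M] [Fintype ι] [DecidableEq ι] (e : Module.Basis ι K M) :
    diagonalProjection e =
      ((2 : K) ^ Fintype.card ι)⁻¹ • ∑ ε : ι → Bool, map (signChange e ε) (signChange e ε) := by
  refine (e.tensorProduct e).ext fun ⟨i, j⟩ => ?_
  rw [diagonalProjection, Module.Basis.constr_basis]
  simp only [Module.Basis.tensorProduct_apply, LinearMap.smul_apply, LinearMap.sum_apply,
    map_signChange_tmul_basis, ← sum_smul, sum_sign_mul_sign, smul_smul]
  split_ifs <;> simp

theorem diagonal_projection_eq_average_and_contractive_general
    {E : Type*} [NormedAddCommGroup E] [NormedSpace ℂ E] {k : ℕ}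
    (e : Module.Basis (Fin k) ℂ E)
    (V : (Fin k → Bool) → E →ₗ[ℂ] E)
    (hV : ∀ ε, V ε = e.constr ℂ fun i => (if ε i then (1 : ℂ) else -1) • e i)
    (ν : Seminorm ℂ (E ⊗[ℂ] E))
    (hν : ∀ ε (x : E ⊗[ℂ] E), ν (TensorProduct.map (V ε) (V ε) x) ≤ ν x)
    (Δ : E ⊗[ℂ] E →ₗ[ℂ] E ⊗[ℂ] E)
    (hΔ : Δ = (e.tensorProduct e).constr ℂ fun ij =>
      if ij.1 = ij.2 then e ij.1 ⊗ₜ[ℂ] e ij.2 else 0) :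
    (Δ = ((2 : ℂ) ^ k)⁻¹ • ∑ ε : Fin k → Bool, TensorProduct.map (V ε) (V ε)) ∧
      (∀ x : E ⊗[ℂ] E, ν (Δ x) ≤ ν x) := by
  obtain rfl : V = signChange e := funext hV
  obtain rfl : Δ = diagonalProjection e := hΔ
  have hΔ_avg := diagonalProjection_eq_average e
  rw [Fintype.card_fin] at hΔ_avg
  refine ⟨hΔ_avg, fun x => ?_⟩
  simpa [hΔ_avg] using
    Seminorm.map_inv_card_smul_sum_le ν univ (fun ε => map (signChange e ε) (signChange e ε) x) x
      fun ε _ => hν ε x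

/-- Let `(e₁,…,e_k)` be a basis of a finite-dimensional normed space `E` such that
each sign-change map `V_ε : e_i ↦ ε_i e_i` is a contraction, and let `ν` be a
(cross) seminorm on `E ⊗ E` for which each `V_ε ⊗ V_ε` is a contraction.  Then the
diagonal projection `Δ` (with `Δ(e_i ⊗ e_j) = 0` for `i ≠ j`, `Δ(e_i ⊗ e_i) = e_i ⊗ e_i`)
equals the average over `ε ∈ {−1,1}^k` of `V_ε ⊗ V_ε`, and hence `Δ` is a
contraction for `ν`. -/
theorem diagonal_projection_eq_average_and_contractive
    {E : Type*} [NormedAddCommGroup E] [NormedSpace ℂ E] {k : ℕ}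
    (e : Module.Basis (Fin k) ℂ E)
    (V : (Fin k → Bool) → E →ₗ[ℂ] E)
    (hV : ∀ ε, V ε = e.constr ℂ fun i => (if ε i then (1 : ℂ) else -1) • e i)
    (hVcontr : ∀ ε (x : E), ‖V ε x‖ ≤ ‖x‖)
    (ν : Seminorm ℂ (E ⊗[ℂ] E))
    (hν : ∀ ε (x : E ⊗[ℂ] E), ν (TensorProduct.map (V ε) (V ε) x) ≤ ν x)
    (Δ : E ⊗[ℂ] E →ₗ[ℂ] E ⊗[ℂ] E)
    (hΔ : Δ = (e.tensorProduct e).constr ℂ fun ij =>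
      if ij.1 = ij.2 then e ij.1 ⊗ₜ[ℂ] e ij.2 else 0) :
    (Δ = ((2 : ℂ) ^ k)⁻¹ • ∑ ε : Fin k → Bool, TensorProduct.map (V ε) (V ε)) ∧
      (∀ x : E ⊗[ℂ] E, ν (Δ x) ≤ ν x) :=
  diagonal_projection_eq_average_and_contractive_general e V hV ν hν Δ hΔ
end

section
/- Let X be a vector space such that each S^p_k ⊗ X carries norms ‖·‖_{α₀} and ‖·‖_{α₁} making X into L^p-matricially normed spaces (i.e., satisfying ‖cyd‖ ≤ ‖c‖_∞‖y‖‖d‖_∞ for c,d ∈ M_k and ‖y ⊕ y'‖^p = ‖y‖^p + ‖y'‖^p for block diagonal sums). Define ‖y‖_β = inf{(‖y₀‖_{α₀}^p + ‖y₁‖_{α₁}^p)^(1/p) : y = y₀ + y₁}. Then ‖·‖_β also satisfies the L^p block-diagonal identity: ‖y ⊕ y'‖_β^p = ‖y‖_β^p + ‖y'‖_β^p. -/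
open scoped BigOperators

/-- Left action of a scalar matrix on a matrix with entries in a module `X`. -/
noncomputable def matSMulLeft {X : Type*} [AddCommGroup X] [Module ℂ X] {k : ℕ}
    (c : Matrix (Fin k) (Fin k) ℂ) (y : Matrix (Fin k) (Fin k) X) :
    Matrix (Fin k) (Fin k) X :=
  Matrix.of fun i j => ∑ l, c i l • y l j

/-- Right action of a scalar matrix on a matrix with entries in a module `X`. -/
noncomputable def matSMulRight {X : Type*} [AddCommGroup X] [Module ℂ X] {k : ℕ}
    (y : Matrix (Fin k) (Fin k) X) (d : Matrix (Fin k) (Fin k) ℂ) :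
    Matrix (Fin k) (Fin k) X :=
  Matrix.of fun i j => ∑ l, d l j • y i l

/-- The block diagonal sum `y ⊕ y'` of an `k × k` and an `m × m` matrix over `X`. -/
noncomputable def blockDiagX {X : Type*} [AddCommGroup X] {k m : ℕ}
    (y : Matrix (Fin k) (Fin k) X) (y' : Matrix (Fin m) (Fin m) X) :
    Matrix (Fin (k + m)) (Fin (k + m)) X :=
  Matrix.reindex finSumFinEquiv finSumFinEquiv (Matrix.fromBlocks y 0 0 y')

/-- `X` together with the family of norms `N k` on the matrix spaces `S^p_k ⊗ X` is an
`L^p`-matricially normed space: the norms satisfy the `M_k`-bimodule contractivity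
property (P1) and the `ℓ^p` block-diagonal additivity property (P2). -/
structure IsLpMatNorm {X : Type*} [AddCommGroup X] [Module ℂ X] (p : ℝ)
    (N : ∀ k : ℕ, Matrix (Fin k) (Fin k) X → ℝ) : Prop where
  nonneg : ∀ k y, 0 ≤ N k y
  zero : ∀ k, N k 0 = 0
  add_le : ∀ k (y y' : Matrix (Fin k) (Fin k) X), N k (y + y') ≤ N k y + N k y'
  bimod : ∀ k (c d : Matrix (Fin k) (Fin k) ℂ) (y : Matrix (Fin k) (Fin k) X),
    N k (matSMulRight (matSMulLeft c y) d) ≤ matOpNorm c * N k y * matOpNorm d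
  block : ∀ (k m : ℕ) (y : Matrix (Fin k) (Fin k) X) (y' : Matrix (Fin m) (Fin m) X),
    N (k + m) (blockDiagX y y') ^ p = N k y ^ p + N m y' ^ p

/-!
Write `‖y‖_β ^ p` as the infimum, over decompositions `y = y₀ + y₁`, of the cost
`‖y₀‖_{α₀} ^ p + ‖y₁‖_{α₁} ^ p`. By (P2) for `α₀` and `α₁`, decompositions of `y` and of `y'`
glue blockwise into a decomposition of `y ⊕ y'` whose cost is the sum of theirs. Conversely,
a decomposition `z₀ + z₁` of `y ⊕ y'` may be replaced by the diagonal blocks of `z₀` and `z₁`: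
the compression of `z` to its diagonal blocks is `(z + u z u) / 2` with `u = 1 ⊕ (-1)`, so by (P1)
and the triangle inequality it does not increase `α₀` or `α₁`, and by (P2) its cost splits into
a cost for `y` plus a cost for `y'`.
-/

open Matrix
open scoped Pointwise

lemma Real.sInf_image_rpow {S : Set ℝ} (hne : S.Nonempty) (hS : ∀ x ∈ S, 0 ≤ x) {q : ℝ}
    (hq : 0 ≤ q) : sInf ((· ^ q) '' S) = sInf S ^ q := by
  refine (MonotoneOn.map_csInf_of_continuousWithinAt ?_ ?_ hne ⟨0, hS⟩).symm
  · exact (Real.continuousAt_rpow_const _ _ (Or.inr hq)).continuousWithinAt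
  · exact fun x hx y hy hxy => Real.rpow_le_rpow (hS x hx) hxy hq

lemma matOpNorm_diagonal {n : ℕ} (v : Fin n → ℂ) : matOpNorm (diagonal v) = ‖v‖ := by
  open scoped Matrix.Norms.L2Operator in exact l2_opNorm_diagonal v

section BlockDiagonal

variable {X : Type*} [AddCommGroup X] {k m : ℕ}

lemma blockDiagX_add (y₀ y₁ : Matrix (Fin k) (Fin k) X) (y₀' y₁' : Matrix (Fin m) (Fin m) X) :
    blockDiagX (y₀ + y₁) (y₀' + y₁') = blockDiagX y₀ y₀' + blockDiagX y₁ y₁' := by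
  change _ = (fromBlocks y₀ 0 0 y₀' + fromBlocks y₁ 0 0 y₁').submatrix _ _
  rw [fromBlocks_add, add_zero, add_zero, blockDiagX, reindex_apply]

lemma submatrix_castAdd_blockDiagX (y : Matrix (Fin k) (Fin k) X)
    (y' : Matrix (Fin m) (Fin m) X) :
    (blockDiagX y y').submatrix (Fin.castAdd m) (Fin.castAdd m) = y := by
  ext i j
  simp [blockDiagX]

lemma submatrix_natAdd_blockDiagX (y : Matrix (Fin k) (Fin k) X)
    (y' : Matrix (Fin m) (Fin m) X) :
    (blockDiagX y y').submatrix (Fin.natAdd k) (Fin.natAdd k) = y' := by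
  ext i j
  simp [blockDiagX]

end BlockDiagonal

section Compression

variable {X : Type*} [AddCommGroup X] [Module ℂ X]

lemma matSMulRight_matSMulLeft_diagonal {n : ℕ} (a b : Fin n → ℂ)
    (z : Matrix (Fin n) (Fin n) X) :
    matSMulRight (matSMulLeft (diagonal a) z) (diagonal b) = of fun i j => (a i * b j) • z i j := by
  ext i j
  simp [matSMulLeft, matSMulRight, diagonal_apply, ite_smul, mul_smul, smul_comm (b j)]

def blockSign (k m : ℕ) : Fin (k + m) → ℂ :=
  Fin.addCases (fun _ => 1) (fun _ => -1)

lemma blockDiagX_submatrix_eq_add {k m : ℕ} (z : Matrix (Fin (k + m)) (Fin (k + m)) X) :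
    blockDiagX (z.submatrix (Fin.castAdd m) (Fin.castAdd m))
        (z.submatrix (Fin.natAdd k) (Fin.natAdd k)) =
      matSMulRight (matSMulLeft (diagonal fun _ => 2⁻¹) z) (diagonal fun _ => 1) +
        matSMulRight (matSMulLeft (diagonal fun i => 2⁻¹ * blockSign k m i) z)
          (diagonal (blockSign k m)) := by
  rw [matSMulRight_matSMulLeft_diagonal, matSMulRight_matSMulLeft_diagonal]
  ext i j
  induction i using Fin.addCases <;> induction j using Fin.addCases <;>
    norm_num [blockDiagX, blockSign, ← add_smul]

theorem IsLpMatNorm.blockDiagX_submatrix_le {p : ℝ} {N : ∀ k : ℕ, Matrix (Fin k) (Fin k) X → ℝ}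
    (hN : IsLpMatNorm p N) {k m : ℕ} (z : Matrix (Fin (k + m)) (Fin (k + m)) X) :
    N (k + m) (blockDiagX (z.submatrix (Fin.castAdd m) (Fin.castAdd m))
      (z.submatrix (Fin.natAdd k) (Fin.natAdd k))) ≤ N (k + m) z := by
  have hsign : ‖blockSign k m‖ ≤ 1 := by
    refine (pi_norm_le_iff_of_nonneg zero_le_one).2 fun i => ?_
    induction i using Fin.addCases <;> simp [blockSign]
  have hhalf : ‖fun _ : Fin (k + m) => (2⁻¹ : ℂ)‖ ≤ 2⁻¹ :=
    (pi_norm_le_iff_of_nonneg (by norm_num)).2 fun _ => by simp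
  have hhalfSign : ‖fun i => 2⁻¹ * blockSign k m i‖ ≤ 2⁻¹ :=
    (pi_norm_le_iff_of_nonneg (by norm_num)).2 fun i => by
      induction i using Fin.addCases <;> simp [blockSign]
  have hone : ‖fun _ : Fin (k + m) => (1 : ℂ)‖ ≤ 1 :=
    (pi_norm_le_iff_of_nonneg zero_le_one).2 fun _ => by simp
  have hz := hN.nonneg (k + m) z
  rw [blockDiagX_submatrix_eq_add]
  calc _ ≤ _ := hN.add_le _ _ _
    _ ≤ _ := add_le_add (hN.bimod _ _ _ _) (hN.bimod _ _ _ _)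
    _ ≤ 2⁻¹ * N (k + m) z * 1 + 2⁻¹ * N (k + m) z * 1 := by
      simp only [matOpNorm_diagonal]
      gcongr
    _ = N (k + m) z := by ring

end Compression

section Decomposition

variable {X : Type*} [AddCommGroup X] {p : ℝ} {N₀ N₁ : ∀ k : ℕ, Matrix (Fin k) (Fin k) X → ℝ}

def decompositionCosts (p : ℝ) (N₀ N₁ : ∀ k : ℕ, Matrix (Fin k) (Fin k) X → ℝ) (k : ℕ)
    (y : Matrix (Fin k) (Fin k) X) : Set ℝ :=
  {t | ∃ y₀ y₁, y = y₀ + y₁ ∧ t = N₀ k y₀ ^ p + N₁ k y₁ ^ p}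

lemma decompositionCosts_nonempty (k : ℕ) (y : Matrix (Fin k) (Fin k) X) :
    (decompositionCosts p N₀ N₁ k y).Nonempty :=
  ⟨_, y, 0, (add_zero y).symm, rfl⟩

lemma image_rpow_decompositionCosts (q : ℝ) (k : ℕ) (y : Matrix (Fin k) (Fin k) X) :
    (· ^ q) '' decompositionCosts p N₀ N₁ k y =
      {r | ∃ y₀ y₁, y = y₀ + y₁ ∧ r = (N₀ k y₀ ^ p + N₁ k y₁ ^ p) ^ q} := by
  ext r
  simp [decompositionCosts, eq_comm]

variable [Module ℂ X]

lemma nonneg_of_mem_decompositionCosts (h₀ : IsLpMatNorm p N₀) (h₁ : IsLpMatNorm p N₁)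
    {k : ℕ} {y : Matrix (Fin k) (Fin k) X} {t : ℝ} (ht : t ∈ decompositionCosts p N₀ N₁ k y) :
    0 ≤ t := by
  obtain ⟨y₀, y₁, -, rfl⟩ := ht
  exact add_nonneg (Real.rpow_nonneg (h₀.nonneg _ _) _) (Real.rpow_nonneg (h₁.nonneg _ _) _)

lemma bddBelow_decompositionCosts (h₀ : IsLpMatNorm p N₀) (h₁ : IsLpMatNorm p N₁)
    (k : ℕ) (y : Matrix (Fin k) (Fin k) X) : BddBelow (decompositionCosts p N₀ N₁ k y) :=
  ⟨0, fun _ => nonneg_of_mem_decompositionCosts h₀ h₁⟩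

lemma add_subset_decompositionCosts_blockDiagX (h₀ : IsLpMatNorm p N₀) (h₁ : IsLpMatNorm p N₁)
    {k m : ℕ} (y : Matrix (Fin k) (Fin k) X) (y' : Matrix (Fin m) (Fin m) X) :
    decompositionCosts p N₀ N₁ k y + decompositionCosts p N₀ N₁ m y' ⊆
      decompositionCosts p N₀ N₁ (k + m) (blockDiagX y y') := by
  rintro _ ⟨_, ⟨y₀, y₁, rfl, rfl⟩, _, ⟨y₀', y₁', rfl, rfl⟩, rfl⟩
  refine ⟨blockDiagX y₀ y₀', blockDiagX y₁ y₁', blockDiagX_add _ _ _ _, ?_⟩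
  rw [h₀.block, h₁.block]
  ring

lemma exists_mem_add_le_of_mem_decompositionCosts_blockDiagX (hp : 0 ≤ p)
    (h₀ : IsLpMatNorm p N₀) (h₁ : IsLpMatNorm p N₁) {k m : ℕ} (y : Matrix (Fin k) (Fin k) X)
    (y' : Matrix (Fin m) (Fin m) X) {t : ℝ}
    (ht : t ∈ decompositionCosts p N₀ N₁ (k + m) (blockDiagX y y')) :
    ∃ s ∈ decompositionCosts p N₀ N₁ k y + decompositionCosts p N₀ N₁ m y', s ≤ t := by
  obtain ⟨z₀, z₁, hz, rfl⟩ := ht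
  have hy := congrArg (submatrix · (Fin.castAdd m) (Fin.castAdd m)) hz
  have hy' := congrArg (submatrix · (Fin.natAdd k) (Fin.natAdd k)) hz
  simp only [submatrix_castAdd_blockDiagX, submatrix_natAdd_blockDiagX, submatrix_add,
    Pi.add_apply] at hy hy'
  refine ⟨_, ⟨_, ⟨_, _, hy, rfl⟩, _, ⟨_, _, hy', rfl⟩, rfl⟩, ?_⟩
  have hc₀ := h₀.block k m (z₀.submatrix (Fin.castAdd m) (Fin.castAdd m))
    (z₀.submatrix (Fin.natAdd k) (Fin.natAdd k))
  have hc₁ := h₁.block k m (z₁.submatrix (Fin.castAdd m) (Fin.castAdd m))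
    (z₁.submatrix (Fin.natAdd k) (Fin.natAdd k))
  have hle₀ := Real.rpow_le_rpow (h₀.nonneg _ _) (h₀.blockDiagX_submatrix_le z₀) hp
  have hle₁ := Real.rpow_le_rpow (h₁.nonneg _ _) (h₁.blockDiagX_submatrix_le z₁) hp
  linarith

theorem sInf_decompositionCosts_blockDiagX (hp : 0 ≤ p) (h₀ : IsLpMatNorm p N₀)
    (h₁ : IsLpMatNorm p N₁) {k m : ℕ} (y : Matrix (Fin k) (Fin k) X)
    (y' : Matrix (Fin m) (Fin m) X) :
    sInf (decompositionCosts p N₀ N₁ (k + m) (blockDiagX y y')) =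
      sInf (decompositionCosts p N₀ N₁ k y) + sInf (decompositionCosts p N₀ N₁ m y') := by
  rw [← csInf_add (decompositionCosts_nonempty k y) (bddBelow_decompositionCosts h₀ h₁ k y)
    (decompositionCosts_nonempty m y') (bddBelow_decompositionCosts h₀ h₁ m y')]
  refine le_antisymm ?_ ?_
  · exact csInf_le_csInf (bddBelow_decompositionCosts h₀ h₁ _ _)
      ((decompositionCosts_nonempty k y).add (decompositionCosts_nonempty m y'))
      (add_subset_decompositionCosts_blockDiagX h₀ h₁ y y')
  · refine le_csInf (decompositionCosts_nonempty _ _) fun t ht => ?_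
    obtain ⟨s, hs, hst⟩ := exists_mem_add_le_of_mem_decompositionCosts_blockDiagX hp h₀ h₁ y y' ht
    exact csInf_le_of_le ((bddBelow_decompositionCosts h₀ h₁ k y).add
      (bddBelow_decompositionCosts h₀ h₁ m y')) hs hst

end Decomposition

/-- The sum `β` of two `L^p`-matricial norm structures,
`‖y‖_β = inf {(‖y₀‖_{α₀}^p + ‖y₁‖_{α₁}^p)^(1/p) : y = y₀ + y₁}`,
again satisfies the `L^p` block-diagonal identity (P2). -/
theorem sum_norm_block_diagonal {X : Type*} [AddCommGroup X] [Module ℂ X]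
    (p : ℝ) (hp : 1 ≤ p)
    (N0 N1 : ∀ k : ℕ, Matrix (Fin k) (Fin k) X → ℝ)
    (h0 : IsLpMatNorm p N0) (h1 : IsLpMatNorm p N1)
    (Nβ : ∀ k : ℕ, Matrix (Fin k) (Fin k) X → ℝ)
    (hβ : ∀ k (y : Matrix (Fin k) (Fin k) X),
      Nβ k y = sInf {r : ℝ | ∃ y0 y1 : Matrix (Fin k) (Fin k) X,
        y = y0 + y1 ∧ r = (N0 k y0 ^ p + N1 k y1 ^ p) ^ (1 / p)}) :
    ∀ (k m : ℕ) (y : Matrix (Fin k) (Fin k) X) (y' : Matrix (Fin m) (Fin m) X),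
      Nβ (k + m) (blockDiagX y y') ^ p = Nβ k y ^ p + Nβ m y' ^ p := by
  have hp₀ : 0 < p := zero_lt_one.trans_le hp
  have hβ_rpow : ∀ n w, Nβ n w ^ p = sInf (decompositionCosts p N0 N1 n w) := fun n w => by
    have hS : ∀ t ∈ decompositionCosts p N0 N1 n w, 0 ≤ t :=
      fun _ => nonneg_of_mem_decompositionCosts h0 h1
    rw [hβ, ← image_rpow_decompositionCosts,
      Real.sInf_image_rpow (decompositionCosts_nonempty n w) hS (by positivity),
      ← Real.rpow_mul (Real.sInf_nonneg hS), one_div_mul_cancel hp₀.ne', Real.rpow_one]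
  intro k m y y'
  rw [hβ_rpow, hβ_rpow, hβ_rpow]
  exact sInf_decompositionCosts_blockDiagX hp₀.le h0 h1 y y'
end
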